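/- arXiv:1907.05781 — 6 statements merged into one kernel-verified Lean document; each statement's English description precedes it below -/
import Mathlib

section
/- Covariance decomposition over a concentration graph (Jones–West). Let K = Σ⁻¹ be the concentration matrix of the random vector X_V. If K is adapted to the undirected graph G = (V,E), then for every pair of distinct vertices x,y ∈ V the covariance σ_xy satisfies σ_xy = Σ_{π ∈ Π_xy} ω(π,Σ), where the sum is over all paths π between x and y in G and ω(π,Σ) = (−1)^{|P|+1} (det K_{P̄P̄}/det K) ∏_{{u,v}∈E(π)} κ_uv with P = V(π). -/
open Matrix BigOperators Finset

variable {V : Type*} [Fintype V] [DecidableEq V]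

/-- Submatrix of `M` with rows indexed by `A` and columns indexed by `B`. -/
noncomputable def subm (M : Matrix V V ℝ) (A B : Finset V) : Matrix ↥A ↥B ℝ :=
  Matrix.of fun i j => M i.1 j.1

/-- Partial covariance matrix `Σ_{AA·B}` of `A` given a disjoint set `B`. -/
noncomputable def pcovOn (M : Matrix V V ℝ) (A B : Finset V) : Matrix ↥A ↥A ℝ :=
  subm M A A - subm M A B * (subm M B B)⁻¹ * subm M B A

/-- Partial covariance matrix `Σ_{AA·Ā}` given the complement of `A`. -/
noncomputable def pcov (M : Matrix V V ℝ) (A : Finset V) : Matrix ↥A ↥A ℝ :=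
  pcovOn M A Aᶜ

/-- Inflation factor of `A` on `B`. -/
noncomputable def inflF (M : Matrix V V ℝ) (A B : Finset V) : ℝ :=
  ((subm M A A).det * (subm M B B).det) / (subm M (A ∪ B) (A ∪ B)).det

/-- The path weight `ω(π, Γ)` of a walk `p`, computed from `Θ = Γ⁻¹`. -/
noncomputable def pathWeight (Γ : Matrix V V ℝ) {G : SimpleGraph V} {x y : V}
    (p : G.Walk x y) : ℝ :=
  (-1 : ℝ) ^ (p.support.toFinset.card + 1) *
    ((subm Γ⁻¹ p.support.toFinsetᶜ p.support.toFinsetᶜ).det / Γ⁻¹.det) *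
    (p.darts.map fun d => Γ⁻¹ d.toProd.1 d.toProd.2).prod

/-- The partial covariance weight `ω(π, Σ_{AA·Ā})` of a walk `p` with vertices in `A`,
expressed via `K = Σ⁻¹`: `(−1)^{|P|+1} (det K_{A∖P,A∖P}/det K_AA) ∏ κ_uv`. -/
noncomputable def partialPathWeight (S : Matrix V V ℝ) (A : Finset V) {G : SimpleGraph V}
    {x y : V} (p : G.Walk x y) : ℝ :=
  (-1 : ℝ) ^ (p.support.toFinset.card + 1) *
    ((subm S⁻¹ (A \ p.support.toFinset) (A \ p.support.toFinset)).det /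
      (subm S⁻¹ A A).det) *
    (p.darts.map fun d => S⁻¹ d.toProd.1 d.toProd.2).prod

/-- `K` is adapted to `G` when nonzero off-diagonal entries correspond to edges. -/
def Adapted (K : Matrix V V ℝ) (G : SimpleGraph V) : Prop :=
  ∀ u v : V, u ≠ v → K u v ≠ 0 → G.Adj u v

/-- Correlation-type scaling of a positive definite matrix. -/
noncomputable def corrScale {ι : Type*} (M : Matrix ι ι ℝ) : Matrix ι ι ℝ :=
  Matrix.of fun i j => M i j / (Real.sqrt (M i i) * Real.sqrt (M j j))

/-- The inflated correlation matrix `Φ^V = diag(K)^{1/2} Σ diag(K)^{1/2}`. -/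
noncomputable def inflCorr (S : Matrix V V ℝ) : Matrix V V ℝ :=
  Matrix.of fun u v => Real.sqrt (S⁻¹ u u) * S u v * Real.sqrt (S⁻¹ v v)

/-- The weight `ω(π, M)` of a walk `p` whose vertices lie in `P`, computed in the
induced subgraph from a matrix `M` indexed by `P`; here `V(π) = P`, so the determinant
factor (over the empty set) is `1`. -/
noncomputable def subPathWeight {P : Finset V} (M : Matrix ↥P ↥P ℝ) {G : SimpleGraph V}
    {x y : V} (p : G.Walk x y) (hp : ∀ v ∈ p.support, v ∈ P) : ℝ :=
  (-1 : ℝ) ^ (p.support.toFinset.card + 1) * (1 / M⁻¹.det) *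
    (p.darts.attach.map fun d =>
      M⁻¹ ⟨d.1.toProd.1, hp _ (SimpleGraph.Walk.dart_fst_mem_support_of_mem_darts p d.2)⟩
          ⟨d.1.toProd.2, hp _ (SimpleGraph.Walk.dart_snd_mem_support_of_mem_darts p d.2)⟩).prod

/-- Product of partial correlations `ρ_{uv·V∖{u,v}} = −κ_uv/(√κ_uu √κ_vv)`
over the edges of a walk. -/
noncomputable def prodPartialCorr (S : Matrix V V ℝ) {G : SimpleGraph V} {x y : V}
    (p : G.Walk x y) : ℝ :=
  (p.darts.map fun d => -(corrScale S⁻¹ d.toProd.1 d.toProd.2)).prod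

/-- A walk is chordless if every edge of `G` joining two of its vertices is an edge of
the walk. -/
def Chordless {G : SimpleGraph V} {x y : V} (p : G.Walk x y) : Prop :=
  ∀ u v : V, u ∈ p.support → v ∈ p.support → G.Adj u v → s(u, v) ∈ p.edges

/-- The quantity `φ(π, R) = det((I−R)_{P̄P̄}) ∏ ρ_{uv·V∖{u,v}}`. -/
noncomputable def phiWeight (S : Matrix V V ℝ) {G : SimpleGraph V} {x y : V}
    (p : G.Walk x y) : ℝ :=
  (subm (corrScale S⁻¹) p.support.toFinsetᶜ p.support.toFinsetᶜ).det * prodPartialCorr S p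

/-!
Since `Σ = K⁻¹`, Cramer's rule gives `σ_xy = det K' / det K`, where `K'` is `K` with row `y`
replaced by the unit vector `e_x`. In the Leibniz expansion of `det K'` a permutation `σ`
contributes only if `σ y = x` and `κ_{i, σ i} ≠ 0` for `i ≠ y`; by adaptedness the cycle of
such a `σ` through `x` then traces a path `π` from `x` to `y` in `G`, and `σ` permutes the
remaining vertices arbitrarily. Grouping the expansion by `π`, the cycle contributes the sign
`(-1)^{|P|+1}` and the product of the `κ_uv` along `π`, and the permutations of `P̄` sum to
`det K_{P̄P̄}`.
-/

open Equiv Equiv.Perm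

namespace Equiv.Perm

variable {α : Type*} [Fintype α] [DecidableEq α]

theorem toList_mul_of_apply_right_eq_self {f g : Perm α} (h : Commute f g) {x : α}
    (hx : g x = x) : toList (f * g) x = toList f x := by
  refine List.ext_getElem (by simp [cycleOf_mul_of_apply_right_eq_self h x hx]) fun n _ _ => ?_
  rw [getElem_toList, getElem_toList, h.mul_pow, mul_apply,
    pow_apply_eq_self_of_apply_eq_self hx]

theorem apply_getLast_toList (σ : Perm α) {x : α} (h : σ.toList x ≠ []) :
    σ ((σ.toList x).getLast h) = x := by
  have hpos : 0 < (σ.toList x).length := List.length_pos_iff.mpr h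
  rw [List.getLast_eq_getElem, getElem_toList, ← mul_apply, ← pow_succ',
    Nat.sub_add_cancel hpos]
  simpa using (pow_mod_card_support_cycleOf_self_apply σ (σ.toList x).length x).symm

theorem exists_eq_formPerm_mul_ofSubtype (σ : Perm α) {x : α} {l : List α}
    (hl : l = σ.toList x) : ∃ τ : Perm ↥(l.toFinsetᶜ), σ = l.formPerm * ofSubtype τ := by
  subst hl
  have hmem : ∀ i, σ i ∈ (σ.toList x).toFinsetᶜ ↔ i ∈ (σ.toList x).toFinsetᶜ := by
    simp [mem_toList_iff, sameCycle_apply_right]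
  refine ⟨σ.subtypePerm hmem, ext fun i => ?_⟩
  by_cases hi : i ∈ σ.toList x
  · rw [mul_apply, ofSubtype_apply_of_not_mem _ (by simpa using hi), formPerm_toList,
      (mem_toList_iff.mp hi).1.cycleOf_apply]
  · have hi' : i ∈ (σ.toList x).toFinsetᶜ := by simpa using hi
    rw [mul_apply, ofSubtype_apply_of_mem _ hi', List.formPerm_apply_of_notMem]
    · rfl
    · simpa using (hmem i).mpr hi'

end Equiv.Perm

namespace List

variable {α : Type*} [Fintype α] [DecidableEq α] {l : List α}
  (τ : Equiv.Perm ↥(l.toFinsetᶜ))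

theorem formPerm_mul_ofSubtype_apply_of_mem {i : α} (hi : i ∈ l) :
    (l.formPerm * ofSubtype τ) i = l.formPerm i := by
  rw [mul_apply, ofSubtype_apply_of_not_mem _ (by simpa using hi)]

theorem formPerm_mul_ofSubtype_apply_of_notMem {i : α} (hi : i ∉ l) :
    (l.formPerm * ofSubtype τ) i = τ ⟨i, by simpa using hi⟩ := by
  have hτ := (τ ⟨i, by simpa using hi⟩).2
  rw [Finset.mem_compl, mem_toFinset] at hτ
  rw [mul_apply, ofSubtype_apply_of_mem _ (by simpa using hi), formPerm_apply_of_notMem hτ]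

theorem disjoint_formPerm_ofSubtype : Equiv.Perm.Disjoint l.formPerm (ofSubtype τ) := fun i => by
  by_cases hi : i ∈ l
  · exact .inr (ofSubtype_apply_of_not_mem _ (by simpa using hi))
  · exact .inl (formPerm_apply_of_notMem hi)

theorem sign_formPerm_mul_ofSubtype (hl : l.Nodup) (h2 : 2 ≤ l.length) :
    sign (l.formPerm * ofSubtype τ) = -(-1) ^ l.length * sign τ := by
  rw [map_mul, sign_ofSubtype, (isCycle_formPerm hl h2).sign,
    support_formPerm_of_nodup l hl (by rintro _ rfl; simp at h2), toFinset_card_of_nodup hl]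

theorem toList_formPerm_mul_ofSubtype (hl : l.Nodup) (h2 : 2 ≤ l.length) :
    toList (l.formPerm * ofSubtype τ) (l[0]'(by omega)) = l := by
  rw [toList_mul_of_apply_right_eq_self (disjoint_formPerm_ofSubtype τ).commute
    (ofSubtype_apply_of_not_mem _ (by simp))]
  exact toList_formPerm_nontrivial l h2 hl

end List

namespace SimpleGraph.Walk

variable {α : Type*} {G : SimpleGraph α} {u v : α}

theorem two_le_length_support (p : G.Walk u v) (huv : u ≠ v) : 2 ≤ p.support.length := by
  have : p.length ≠ 0 := fun h => huv (eq_of_length_eq_zero h)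
  rw [length_support]
  omega

theorem formPerm_support_end [DecidableEq α] (p : G.Walk u v) : p.support.formPerm v = u := by
  have h := List.formPerm_apply_getLast u p.support.tail
  simp_rw [p.cons_tail_support, p.getLast_support] at h
  exact h

theorem formPerm_support_dart_fst [DecidableEq α] {p : G.Walk u v} (hp : p.support.Nodup)
    {d : G.Dart} (hd : d ∈ p.darts) : p.support.formPerm d.fst = d.snd := by
  obtain ⟨i, hi, rfl⟩ := List.getElem_of_mem hd
  have hi' : i + 1 < p.support.length := by simp only [length_darts] at hi; simp; omega
  rw [fst_darts_getElem, snd_darts_getElem, List.getElem_dropLast, List.getElem_tail,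
    List.formPerm_apply_lt_getElem _ hp i hi']

end SimpleGraph.Walk

namespace SimpleGraph

variable {α : Type*} [Fintype α] [DecidableEq α] {G : SimpleGraph α} {x y : α}

theorem exists_path_support_eq_toList (σ : Perm α) (hxy : x ≠ y) (hσ : σ y = x)
    (hadj : ∀ i, i ≠ y → σ i ≠ i → G.Adj i (σ i)) :
    ∃ p : G.Path x y, (p : G.Walk x y).support = σ.toList x := by
  set L := σ.toList x
  have hnd : L.Nodup := nodup_toList σ x
  have hne : L ≠ [] := toList_eq_nil_iff.not.mpr <| not_not.mpr <|
    Equiv.Perm.mem_support.mpr fun hx => hxy (σ.injective (hx.trans hσ.symm))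
  have hhead : L.head hne = x := by
    rw [List.head_eq_getElem_zero, getElem_toList, pow_zero, one_apply]
  have hlast : L.getLast hne = y := σ.injective ((apply_getLast_toList σ hne).trans hσ.symm)
  have hsucc : ∀ i (hi : i + 1 < L.length), L[i + 1] = σ L[i] := fun i hi => by
    rw [getElem_toList, getElem_toList, pow_succ', mul_apply]
  have hchain : L.IsChain G.Adj := by
    refine List.isChain_iff_getElem.mpr fun i hi => ?_
    rw [hsucc i hi]
    refine hadj _ (fun hy => ?_) (fun hfix => ?_)
    · rw [← hlast, List.getLast_eq_getElem, hnd.getElem_inj_iff] at hy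
      omega
    · rw [← hsucc i hi, hnd.getElem_inj_iff] at hfix
      omega
  refine ⟨⟨(Walk.ofSupport L hne hchain).copy hhead hlast, ?_⟩, ?_⟩
  · rw [Walk.isPath_def, Walk.support_copy, Walk.support_ofSupport]
    exact hnd
  · rw [Walk.support_copy, Walk.support_ofSupport]

/-- A path `p` from `x` to `y` together with a permutation `τ` of the vertices off `p` encodes
the permutation of `α` that runs along `p`, sends `y` back to `x`, and acts as `τ` elsewhere. -/
def pathPerm (G : SimpleGraph α) (x y : α)
    (z : Σ p : G.Path x y, Perm ↥((p : G.Walk x y).support.toFinsetᶜ)) : Perm α :=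
  (z.1 : G.Walk x y).support.formPerm * ofSubtype z.2

theorem pathPerm_injective (hxy : x ≠ y) : Function.Injective (pathPerm G x y) := by
  rintro ⟨p, τ⟩ ⟨q, τ'⟩ h
  have hp := List.toList_formPerm_mul_ofSubtype τ p.2.support_nodup
    ((p : G.Walk x y).two_le_length_support hxy)
  have hq := List.toList_formPerm_mul_ofSubtype τ' q.2.support_nodup
    ((q : G.Walk x y).two_le_length_support hxy)
  simp only [Walk.support_getElem_zero] at hp hq
  obtain rfl : p = q := Subtype.ext <| Walk.ext_support <| by
    rw [← hp, ← hq]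
    exact congrArg (toList · x) h
  obtain rfl : τ = τ' := ofSubtype_injective (mul_left_cancel h)
  rfl

theorem exists_pathPerm_eq (σ : Perm α) (hxy : x ≠ y) (hσ : σ y = x)
    (hadj : ∀ i, i ≠ y → σ i ≠ i → G.Adj i (σ i)) : ∃ z, pathPerm G x y z = σ := by
  obtain ⟨p, hp⟩ := exists_path_support_eq_toList σ hxy hσ hadj
  obtain ⟨τ, hτ⟩ := exists_eq_formPerm_mul_ofSubtype σ hp
  exact ⟨⟨p, τ⟩, hτ.symm⟩

variable {R : Type*} [CommRing R]

theorem sign_pathPerm (hxy : x ≠ y) (p : G.Path x y)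
    (τ : Perm ↥((p : G.Walk x y).support.toFinsetᶜ)) :
    ((sign (pathPerm G x y ⟨p, τ⟩) : ℤ) : R) =
      (-1) ^ ((p : G.Walk x y).support.toFinset.card + 1) * (sign τ : ℤ) := by
  rw [pathPerm, List.sign_formPerm_mul_ofSubtype τ p.2.support_nodup
    ((p : G.Walk x y).two_le_length_support hxy), List.toFinset_card_of_nodup p.2.support_nodup]
  push_cast
  ring

theorem prod_updateRow_pathPerm (K : Matrix α α R) (p : G.Path x y)
    (τ : Perm ↥((p : G.Walk x y).support.toFinsetᶜ)) :
    ∏ i, K.updateRow y (Pi.single x 1) i (pathPerm G x y ⟨p, τ⟩ i) =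
      ((p : G.Walk x y).darts.map fun d => K d.fst d.snd).prod *
        ∏ j : ↥((p : G.Walk x y).support.toFinsetᶜ), K j (τ j) := by
  have hnd : (p : G.Walk x y).support.Nodup := p.2.support_nodup
  rw [← Finset.prod_mul_prod_compl (p : G.Walk x y).support.toFinset]
  congr 1
  · have hy : y ∉ (p : G.Walk x y).darts.map (·.fst) := by
      have := (p : G.Walk x y).map_fst_darts_append ▸ hnd
      exact fun h => (List.nodup_append.mp this).2.2 y h y (List.mem_singleton_self y) rfl
    have hσy : pathPerm G x y ⟨p, τ⟩ y = x := by
      rw [pathPerm, List.formPerm_mul_ofSubtype_apply_of_mem τ (p : G.Walk x y).end_mem_support,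
        Walk.formPerm_support_end]
    rw [List.prod_toFinset _ hnd, ← (p : G.Walk x y).map_fst_darts_append, List.map_append,
      List.prod_append, List.map_map, List.map_singleton, List.prod_singleton, hσy,
      updateRow_self, Pi.single_eq_same, mul_one]
    refine congrArg List.prod (List.map_congr_left fun d hd => ?_)
    rw [Function.comp_apply, updateRow_ne (ne_of_mem_of_not_mem (List.mem_map_of_mem hd) hy),
      pathPerm, List.formPerm_mul_ofSubtype_apply_of_mem τ
        ((p : G.Walk x y).dart_fst_mem_support_of_mem_darts hd),
      Walk.formPerm_support_dart_fst hnd hd]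
  · rw [← Finset.prod_coe_sort]
    refine Finset.prod_congr rfl fun j _ => ?_
    have hj : (j : α) ∉ (p : G.Walk x y).support :=
      List.mem_toFinset.not.mp (Finset.mem_compl.mp j.2)
    rw [updateRow_ne (ne_of_mem_of_not_mem (p : G.Walk x y).end_mem_support hj).symm, pathPerm,
      List.formPerm_mul_ofSubtype_apply_of_notMem τ hj]

theorem exists_pathPerm_eq_of_prod_updateRow_ne_zero {K : Matrix α α R}
    (hK : ∀ u v, u ≠ v → K u v ≠ 0 → G.Adj u v) (hxy : x ≠ y) {σ : Perm α}
    (h : ∏ i, K.updateRow y (Pi.single x 1) i (σ i) ≠ 0) : ∃ z, pathPerm G x y z = σ := by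
  have hne : ∀ i, K.updateRow y (Pi.single x 1) i (σ i) ≠ 0 := fun i hi =>
    h (Finset.prod_eq_zero (Finset.mem_univ i) hi)
  refine exists_pathPerm_eq σ hxy ?_ fun i hiy hσi => hK i (σ i) hσi.symm ?_
  · by_contra hσy
    exact hne y (by rw [updateRow_self, Pi.single_eq_of_ne hσy])
  · simpa [updateRow_ne hiy] using hne i

theorem det_updateRow_single_eq_sum_paths [DecidableRel G.Adj] (K : Matrix α α R)
    (hK : ∀ u v, u ≠ v → K u v ≠ 0 → G.Adj u v) (hxy : x ≠ y) :
    (K.updateRow y (Pi.single x 1)).det = ∑ p : G.Path x y,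
      (-1) ^ ((p : G.Walk x y).support.toFinset.card + 1) *
        (K.submatrix ((↑) : ↥((p : G.Walk x y).support.toFinsetᶜ) → α) (↑)).det *
        ((p : G.Walk x y).darts.map fun d => K d.fst d.snd).prod := by
  rw [← det_transpose, det_apply']
  simp only [transpose_apply]
  rw [← Finset.sum_of_injOn (pathPerm G x y) (pathPerm_injective hxy).injOn
    (fun _ _ => Finset.mem_coe.mpr (Finset.mem_univ _)) ?_ (fun _ _ => rfl), Fintype.sum_sigma]
  · refine Finset.sum_congr rfl fun p _ => ?_
    rw [← det_transpose, det_apply', Finset.mul_sum, Finset.sum_mul]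
    refine Finset.sum_congr rfl fun τ _ => ?_
    rw [sign_pathPerm hxy, prod_updateRow_pathPerm]
    simp only [transpose_apply, submatrix_apply]
    ring
  · rintro σ - hσ
    by_contra h
    obtain ⟨z, rfl⟩ :=
      exists_pathPerm_eq_of_prod_updateRow_ne_zero hK hxy (right_ne_zero_of_mul h)
    exact hσ ⟨z, by simp, rfl⟩

end SimpleGraph

theorem Matrix.inv_apply_eq_det_updateRow_div {ι K : Type*} [Fintype ι] [DecidableEq ι] [Field K]
    (A : Matrix ι ι K) (i j : ι) : A⁻¹ i j = (A.updateRow j (Pi.single i 1)).det / A.det := by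
  rw [inv_def, smul_apply, adjugate_apply, Ring.inverse_eq_inv', smul_eq_mul, div_eq_inv_mul]

theorem subm_eq_submatrix {W : Type*} (M : Matrix W W ℝ) (A B : Finset W) :
    subm M A B = M.submatrix (↑) (↑) :=
  rfl

/-- Covariance decomposition over a concentration graph (Jones–West). -/
theorem covariance_decomposition {V : Type*} [Fintype V] [DecidableEq V]
    (S : Matrix V V ℝ) (hS : S.PosDef) (G : SimpleGraph V) [DecidableRel G.Adj]
    (hadapt : Adapted S⁻¹ G) (x y : V) (hxy : x ≠ y) :
    S x y = ∑ p : G.Path x y, pathWeight S (p : G.Walk x y) := by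
  have hdet : IsUnit S.det := isUnit_iff_ne_zero.mpr hS.det_pos.ne'
  calc S x y = S⁻¹⁻¹ x y := by rw [S.nonsing_inv_nonsing_inv hdet]
    _ = ∑ p : G.Path x y, pathWeight S (p : G.Walk x y) := by
      rw [Matrix.inv_apply_eq_det_updateRow_div,
        SimpleGraph.det_updateRow_single_eq_sum_paths S⁻¹ hadapt hxy, Finset.sum_div]
      refine Finset.sum_congr rfl fun p _ => ?_
      rw [pathWeight, subm_eq_submatrix]
      ring
end

section
/- For every pair of distinct u,v ∈ V, the off-diagonal entry of the inflated correlation matrix factorizes as ϱ^V_uv = ρ_uv · √(IF_u · IF_v), where ρ_uv = σ_uv/√(σ_uu σ_vv) is the marginal correlation and IF_u, IF_v are the variance inflation factors of u and v. In the special case |V| = 2 this reduces to ϱ^{{u,v}}_uv = ρ_uv/(1 − ρ_uv²). -/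
open Matrix BigOperators Finset

variable {V : Type*} [Fintype V] [DecidableEq V]

/-! `IF_u = σ_uu κ_uu` by the cofactor formula `κ_uu = det Σ_{ūū} / det Σ`, and
`√(κ_uu) σ_uv √(κ_vv) = ρ_uv √(σ_uu κ_uu · σ_vv κ_vv)` is then plain algebra. When
`V = {u, v}`, `IF_u = IF_v = σ_uu σ_vv / det Σ = 1 / (1 − ρ_uv²)`. -/

lemma det_subm_univ (M : Matrix V V ℝ) : (subm M univ univ).det = M.det :=
  det_submatrix_equiv_self (Equiv.subtypeUnivEquiv mem_univ) M

lemma det_subm_singleton {ι : Type*} [DecidableEq ι] (M : Matrix ι ι ℝ) (u : ι) :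
    (subm M {u} {u}).det = M u u :=
  det_unique _

lemma det_updateRow_single_self (M : Matrix V V ℝ) (u : V) :
    (M.updateRow u (Pi.single u 1)).det = (subm M {u}ᶜ {u}ᶜ).det := by
  let e := Equiv.sumCompl fun x => x ∈ ({u}ᶜ : Finset V)
  have hne : ∀ x : ↥({u}ᶜ : Finset V), x.1 ≠ u := fun x hx =>
    mem_compl.mp x.2 (mem_singleton.mpr hx)
  have hu : ∀ x : {x // x ∉ ({u}ᶜ : Finset V)}, x.1 = u := fun x => by simpa using x.2
  have : Unique {x // x ∉ ({u}ᶜ : Finset V)} := ⟨⟨⟨u, by simp⟩⟩, fun x => Subtype.ext (hu x)⟩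
  have hblocks : (M.updateRow u (Pi.single u 1)).submatrix e e =
      fromBlocks (subm M {u}ᶜ {u}ᶜ) (of fun i j => M i.1 j.1) 0 1 := by
    ext (i | i) (j | j)
    · simp [e, subm, updateRow_apply, hne i]
    · simp [e, updateRow_apply, hne i]
    · simp [e, hu i, hne j]
    · simp [e, hu j, Subsingleton.elim i j]
  rw [← det_submatrix_equiv_self e, hblocks, det_fromBlocks_zero₂₁, det_one, mul_one]

lemma inv_apply_self_eq_det_div (M : Matrix V V ℝ) (u : V) :
    M⁻¹ u u = (subm M {u}ᶜ {u}ᶜ).det / M.det := by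
  rw [Matrix.inv_def, Matrix.smul_apply, adjugate_apply, det_updateRow_single_self,
    Ring.inverse_eq_inv', smul_eq_mul, inv_mul_eq_div]

lemma inflF_singleton_compl (M : Matrix V V ℝ) (u : V) :
    inflF M {u} {u}ᶜ = M u u * (subm M {u}ᶜ {u}ᶜ).det / M.det := by
  rw [inflF, union_compl, det_subm_univ, det_subm_singleton]

lemma inflF_singleton_compl_eq_mul_inv_apply (M : Matrix V V ℝ) (u : V) :
    inflF M {u} {u}ᶜ = M u u * M⁻¹ u u := by
  rw [inflF_singleton_compl, inv_apply_self_eq_det_div, mul_div_assoc]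

lemma compl_singleton_eq_of_pair_eq_univ {u v : V} (huv : u ≠ v)
    (h : ({u, v} : Finset V) = univ) : ({u}ᶜ : Finset V) = {v} := by
  ext x
  have hx : x ∈ ({u, v} : Finset V) := h ▸ mem_univ x
  simp only [mem_insert, mem_singleton] at hx
  rcases hx with rfl | rfl <;> simp [huv, Ne.symm huv]

lemma det_eq_of_pair_eq_univ {R : Type*} [CommRing R] (M : Matrix V V R) {u v : V}
    (huv : u ≠ v) (h : ({u, v} : Finset V) = univ) :
    M.det = M u u * M v v - M u v * M v u := by
  have hbij : Function.Bijective ![u, v] := by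
    refine ⟨fun i j hij => ?_, fun x => ?_⟩
    · fin_cases i <;> fin_cases j <;> simp_all [eq_comm]
    · have hx : x ∈ ({u, v} : Finset V) := h ▸ mem_univ x
      rcases mem_insert.mp hx with rfl | hx
      · exact ⟨0, rfl⟩
      · exact ⟨1, (mem_singleton.mp hx).symm⟩
  rw [← det_submatrix_equiv_self (Equiv.ofBijective _ hbij), det_fin_two]
  rfl

lemma inflF_singleton_compl_of_pair_eq_univ (M : Matrix V V ℝ) {u v : V} (huv : u ≠ v)
    (h : ({u, v} : Finset V) = univ) :
    inflF M {u} {u}ᶜ = M u u * M v v / (M u u * M v v - M u v * M v u) := by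
  rw [inflF_singleton_compl, compl_singleton_eq_of_pair_eq_univ huv h, det_subm_singleton,
    det_eq_of_pair_eq_univ M huv h]

lemma inflCorr_apply_eq_corr_mul_sqrt_inflF {S : Matrix V V ℝ} (hS : S.PosDef) (u v : V) :
    inflCorr S u v =
      S u v / Real.sqrt (S u u * S v v) * Real.sqrt (inflF S {u} {u}ᶜ * inflF S {v} {v}ᶜ) := by
  have hSu : 0 < S u u := hS.diag_pos
  have hSv : 0 < S v v := hS.diag_pos
  have hKu : 0 < S⁻¹ u u := hS.inv.diag_pos
  have hKv : 0 < S⁻¹ v v := hS.inv.diag_pos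
  have hsqrt : Real.sqrt (S u u * S⁻¹ u u * (S v v * S⁻¹ v v)) =
      Real.sqrt (S u u) * Real.sqrt (S v v) * (Real.sqrt (S⁻¹ u u) * Real.sqrt (S⁻¹ v v)) := by
    rw [mul_mul_mul_comm, Real.sqrt_mul (by positivity), Real.sqrt_mul hSu.le,
      Real.sqrt_mul hKu.le]
  have : Real.sqrt (S u u) * Real.sqrt (S v v) ≠ 0 := by positivity
  rw [inflF_singleton_compl_eq_mul_inv_apply, inflF_singleton_compl_eq_mul_inv_apply, hsqrt,
    Real.sqrt_mul hSu.le]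
  simp only [inflCorr, of_apply]
  field_simp

lemma inflCorr_apply_of_pair_eq_univ {S : Matrix V V ℝ} (hS : S.PosDef) {u v : V} (huv : u ≠ v)
    (h : ({u, v} : Finset V) = univ) :
    inflCorr S u v =
      S u v / Real.sqrt (S u u * S v v) / (1 - (S u v / Real.sqrt (S u u * S v v)) ^ 2) := by
  have hSu : 0 < S u u := hS.diag_pos
  have hSv : 0 < S v v := hS.diag_pos
  have hsymm : S v u = S u v := by simpa using hS.isHermitian.apply u v
  have hdet : S.det = S u u * S v v - S u v ^ 2 := by
    rw [det_eq_of_pair_eq_univ S huv h, hsymm, sq]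
  have hIFu : inflF S {u} {u}ᶜ = S u u * S v v / S.det := by
    rw [inflF_singleton_compl_of_pair_eq_univ S huv h, hsymm, ← sq, ← hdet]
  have hIFv : inflF S {v} {v}ᶜ = S u u * S v v / S.det := by
    rw [inflF_singleton_compl_of_pair_eq_univ S (Ne.symm huv) (by rwa [pair_comm]), hsymm, ← sq,
      mul_comm (S v v), ← hdet]
  have hcorr : 1 - (S u v / Real.sqrt (S u u * S v v)) ^ 2 = S.det / (S u u * S v v) := by
    rw [div_pow, Real.sq_sqrt (by positivity), hdet]
    field_simp
  rw [inflCorr_apply_eq_corr_mul_sqrt_inflF hS, hIFu, hIFv, ← sq,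
    Real.sqrt_sq (by positivity [hS.det_pos]), hcorr]
  field_simp

/-- `ϱ^V_uv = ρ_uv √(IF_u · IF_v)`, and for `|V| = 2` (i.e. `{u,v} = V`)
this reduces to `ϱ_uv = ρ_uv/(1 − ρ_uv²)`. -/
theorem inflCorr_offdiag_factorization {V : Type*} [Fintype V] [DecidableEq V]
    (S : Matrix V V ℝ) (hS : S.PosDef) (u v : V) (huv : u ≠ v) :
    inflCorr S u v =
      (S u v / Real.sqrt (S u u * S v v)) * Real.sqrt (inflF S {u} {u}ᶜ * inflF S {v} {v}ᶜ) ∧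
    (({u, v} : Finset V) = Finset.univ →
      inflCorr S u v =
        (S u v / Real.sqrt (S u u * S v v)) / (1 - (S u v / Real.sqrt (S u u * S v v)) ^ 2)) :=
  ⟨inflCorr_apply_eq_corr_mul_sqrt_inflF hS u v, inflCorr_apply_of_pair_eq_univ hS huv⟩
end

section
/- Partial covariance decomposition over an induced subgraph. Let K = Σ⁻¹ be the concentration matrix of X_V. If K is adapted to the graph G = (V,E), then for every A ⊆ V and every pair of distinct x,y ∈ A it holds that σ_{xy·Ā} = Σ_{π ∈ Π^A_xy} ω(π, Σ_{AA·Ā}), where the sum is over all paths between x and y whose vertices lie in A (equivalently, all paths in the induced subgraph G_A), and ω(π, Σ_{AA·Ā}) = (−1)^{|P|+1} (det K_{A∖P,A∖P} / det K_AA) ∏_{{u,v}∈E(π)} κ_uv with P = V(π). -/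
open Matrix BigOperators Finset

variable {V : Type*} [Fintype V] [DecidableEq V]

/-! Both identities are Schur complement computations. Eliminating the block `Ā` of `Σ` shows
`Σ_{AA·Ā} = (K_AA)⁻¹`. Eliminating the single vertex `x` from `K_AA` gives
`(K_AA)⁻¹_xx = det K_{A∖x} / det K_AA` and, for `y ≠ x`,
`(K_AA)⁻¹_xy = -(det K_{A∖x} / det K_AA) ∑_{v ∈ A∖x} κ_xv (K_{A∖x})⁻¹_vy`.
By induction on `A`, the entries `(K_{A∖x})⁻¹_vy` expand over paths from `v` to `y` inside `A∖x`;
adaptedness kills the terms with `v` not adjacent to `x`, and prefixing the edge `xv` is a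
bijection onto the paths from `x` to `y` inside `A` that multiplies each weight by exactly the
factor `-(det K_{A∖x} / det K_AA) κ_xv`. -/

namespace Matrix

variable {m n : Type*} [Fintype m] [Fintype n] [DecidableEq m] [DecidableEq n]

theorem inv_fromBlocks_of_isUnit_det₂₂ (A : Matrix m m ℝ) (B : Matrix m n ℝ)
    (C : Matrix n m ℝ) (D : Matrix n n ℝ) (hD : IsUnit D.det)
    (hM : IsUnit (fromBlocks A B C D).det) :
    (fromBlocks A B C D)⁻¹ =
      fromBlocks (A - B * D⁻¹ * C)⁻¹ (-((A - B * D⁻¹ * C)⁻¹ * B * D⁻¹))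
        (-(D⁻¹ * C * (A - B * D⁻¹ * C)⁻¹))
        (D⁻¹ + D⁻¹ * C * (A - B * D⁻¹ * C)⁻¹ * B * D⁻¹) := by
  let := D.invertibleOfIsUnitDet hD
  let := (fromBlocks A B C D).invertibleOfIsUnitDet hM
  have hS : IsUnit (A - B * ⅟D * C).det := by
    rw [det_fromBlocks₂₂] at hM
    exact isUnit_of_mul_isUnit_right hM
  let := (A - B * ⅟D * C).invertibleOfIsUnitDet hS
  simpa only [invOf_eq_nonsing_inv] using invOf_fromBlocks₂₂_eq A B C D

end Matrix

section Schur

variable {ι : Type*} [DecidableEq ι] (K : Matrix ι ι ℝ) {A B C : Finset ι}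

theorem subm_union_submatrix_eq_fromBlocks (hAB : Disjoint A B) :
    (subm K (A ∪ B) (A ∪ B)).submatrix (Equiv.Finset.union A B hAB)
        (Equiv.Finset.union A B hAB) =
      fromBlocks (subm K A A) (subm K A B) (subm K B A) (subm K B B) := by
  ext (i | i) (j | j) <;> rfl

theorem det_subm_eq_det_mul_det_pcovOn (hAB : Disjoint A B) (hC : A ∪ B = C)
    (hB : IsUnit (subm K B B).det) :
    (subm K C C).det = (subm K B B).det * (pcovOn K A B).det := by
  subst hC
  let := (subm K B B).invertibleOfIsUnitDet hB
  rw [← det_submatrix_equiv_self (Equiv.Finset.union A B hAB),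
    subm_union_submatrix_eq_fromBlocks, det_fromBlocks₂₂, invOf_eq_nonsing_inv, pcovOn]

theorem inv_subm_submatrix_eq_fromBlocks (hAB : Disjoint A B)
    (hB : IsUnit (subm K B B).det) (hK : IsUnit (subm K (A ∪ B) (A ∪ B)).det) :
    (subm K (A ∪ B) (A ∪ B))⁻¹.submatrix (Equiv.Finset.union A B hAB)
        (Equiv.Finset.union A B hAB) =
      fromBlocks (pcovOn K A B)⁻¹ (-((pcovOn K A B)⁻¹ * subm K A B * (subm K B B)⁻¹))
        (-((subm K B B)⁻¹ * subm K B A * (pcovOn K A B)⁻¹))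
        ((subm K B B)⁻¹ + (subm K B B)⁻¹ * subm K B A * (pcovOn K A B)⁻¹ *
          subm K A B * (subm K B B)⁻¹) := by
  rw [← inv_submatrix_equiv, subm_union_submatrix_eq_fromBlocks]
  refine inv_fromBlocks_of_isUnit_det₂₂ _ _ _ _ hB ?_
  rwa [← subm_union_submatrix_eq_fromBlocks K hAB, det_submatrix_equiv_self]

variable {i j : ι}

theorem inv_subm_apply_of_mem_left_of_mem_left (hAB : Disjoint A B) (hC : A ∪ B = C)
    (hB : IsUnit (subm K B B).det) (hK : IsUnit (subm K C C).det)
    (hi : i ∈ A) (hj : j ∈ A) (hi' : i ∈ C) (hj' : j ∈ C) :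
    (subm K C C)⁻¹ ⟨i, hi'⟩ ⟨j, hj'⟩ = (pcovOn K A B)⁻¹ ⟨i, hi⟩ ⟨j, hj⟩ := by
  subst hC
  exact congrFun (congrFun (inv_subm_submatrix_eq_fromBlocks K hAB hB hK)
    (Sum.inl ⟨i, hi⟩)) (Sum.inl ⟨j, hj⟩)

theorem inv_subm_apply_of_mem_left_of_mem_right (hAB : Disjoint A B) (hC : A ∪ B = C)
    (hB : IsUnit (subm K B B).det) (hK : IsUnit (subm K C C).det)
    (hi : i ∈ A) (hj : j ∈ B) (hi' : i ∈ C) (hj' : j ∈ C) :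
    (subm K C C)⁻¹ ⟨i, hi'⟩ ⟨j, hj'⟩ =
      -((pcovOn K A B)⁻¹ * subm K A B * (subm K B B)⁻¹) ⟨i, hi⟩ ⟨j, hj⟩ := by
  subst hC
  exact congrFun (congrFun (inv_subm_submatrix_eq_fromBlocks K hAB hB hK)
    (Sum.inl ⟨i, hi⟩)) (Sum.inr ⟨j, hj⟩)

end Schur

section OneVertex

variable {ι : Type*} [DecidableEq ι] (K : Matrix ι ι ℝ) {A : Finset ι} {x : ι}

theorem disjoint_singleton_erase (A : Finset ι) (x : ι) : Disjoint {x} (A.erase x) :=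
  disjoint_singleton_left.2 (notMem_erase x A)

theorem singleton_union_erase (hx : x ∈ A) : {x} ∪ A.erase x = A := by
  rw [← insert_eq, insert_erase hx]

theorem inv_subm_apply_self (hx : x ∈ A) (hA : IsUnit (subm K A A).det)
    (hB : IsUnit (subm K (A.erase x) (A.erase x)).det) :
    (subm K A A)⁻¹ ⟨x, hx⟩ ⟨x, hx⟩ =
      (subm K (A.erase x) (A.erase x)).det / (subm K A A).det := by
  have hU := singleton_union_erase hx
  have hdisj := disjoint_singleton_erase A x
  let x₀ : ↥({x} : Finset ι) := ⟨x, mem_singleton_self x⟩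
  rw [inv_subm_apply_of_mem_left_of_mem_left K hdisj hU hB hA x₀.2 x₀.2,
    det_subm_eq_det_mul_det_pcovOn K hdisj hU hB, inv_subsingleton, diagonal_apply_eq,
    det_eq_elem_of_subsingleton _ x₀, Ring.inverse_eq_inv, div_mul_cancel_left₀ hB.ne_zero]

theorem inv_subm_apply_of_ne (hx : x ∈ A) {y : ι} (hy : y ∈ A) (hyx : y ≠ x)
    (hA : IsUnit (subm K A A).det) (hB : IsUnit (subm K (A.erase x) (A.erase x)).det) :
    (subm K A A)⁻¹ ⟨x, hx⟩ ⟨y, hy⟩ =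
      -((subm K (A.erase x) (A.erase x)).det / (subm K A A).det) *
        ∑ v : ↥(A.erase x),
          K x v * (subm K (A.erase x) (A.erase x))⁻¹ v ⟨y, mem_erase.2 ⟨hyx, hy⟩⟩ := by
  have hU := singleton_union_erase hx
  have hdisj := disjoint_singleton_erase A x
  rw [← inv_subm_apply_self K hx hA hB,
    inv_subm_apply_of_mem_left_of_mem_right K hdisj hU hB hA (mem_singleton_self x)
      (mem_erase.2 ⟨hyx, hy⟩),
    inv_subm_apply_of_mem_left_of_mem_left K hdisj hU hB hA (mem_singleton_self x)
      (mem_singleton_self x), Matrix.mul_assoc]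
  simp only [mul_apply, Fintype.sum_unique, neg_mul]
  rfl

end OneVertex

theorem isUnit_det_subm_of_posDef {ι : Type*} [DecidableEq ι] {M : Matrix ι ι ℝ}
    (hM : M.PosDef) (B : Finset ι) : IsUnit (subm M B B).det :=
  (isUnit_iff_isUnit_det _).1 (hM.submatrix Subtype.val_injective).isUnit

section Complement

variable {ι : Type*} [Fintype ι] [DecidableEq ι] (S : Matrix ι ι ℝ) {A : Finset ι}

theorem pcov_eq_inv_subm_inv (hS : IsUnit S.det) (hA : IsUnit (subm S Aᶜ Aᶜ).det) :
    pcov S A = (subm S⁻¹ A A)⁻¹ := by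
  have hdisj : Disjoint A Aᶜ := disjoint_compl_right
  have hU : A ∪ Aᶜ = univ := union_compl A
  have hSS : subm S univ univ =
      S.submatrix (Equiv.subtypeUnivEquiv mem_univ) (Equiv.subtypeUnivEquiv mem_univ) := rfl
  have hSu : IsUnit (subm S univ univ).det := by
    rwa [hSS, det_submatrix_equiv_self]
  have hP : IsUnit (pcov S A).det := by
    rw [det_subm_eq_det_mul_det_pcovOn S hdisj hU hA] at hSu
    exact isUnit_of_mul_isUnit_right hSu
  have hinv : subm S⁻¹ A A = (pcov S A)⁻¹ := by
    ext i j
    have h := inv_subm_apply_of_mem_left_of_mem_left S hdisj hU hA hSu i.2 j.2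
      (mem_univ _) (mem_univ _)
    rwa [hSS, inv_submatrix_equiv] at h
  rw [hinv, nonsing_inv_nonsing_inv _ hP]

end Complement

section Weights

variable {G : SimpleGraph V} {x y : V}

theorem partialPathWeight_nil (S : Matrix V V ℝ) (A : Finset V) :
    partialPathWeight S A (SimpleGraph.Walk.nil : G.Walk x x) =
      (subm S⁻¹ (A.erase x) (A.erase x)).det / (subm S⁻¹ A A).det := by
  have hP : (SimpleGraph.Walk.nil : G.Walk x x).support.toFinset = {x} := rfl
  rw [partialPathWeight, hP, sdiff_singleton_eq_erase]
  simp

theorem partialPathWeight_cons (S : Matrix V V ℝ) (A : Finset V) {v : V}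
    (hB : IsUnit (subm S⁻¹ (A.erase x) (A.erase x)).det) (h : G.Adj x v) (q : G.Walk v y)
    (hxq : x ∉ q.support) :
    partialPathWeight S A (.cons h q) =
      -((subm S⁻¹ (A.erase x) (A.erase x)).det / (subm S⁻¹ A A).det) *
        (S⁻¹ x v * partialPathWeight S (A.erase x) q) := by
  have hcard : (insert x q.support.toFinset).card = q.support.toFinset.card + 1 :=
    card_insert_of_notMem (mt List.mem_toFinset.1 hxq)
  rw [partialPathWeight, partialPathWeight, SimpleGraph.Walk.support_cons, List.toFinset_cons,
    hcard, sdiff_insert, ← erase_sdiff_comm, SimpleGraph.Walk.darts_cons, List.map_cons,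
    List.prod_cons, pow_succ]
  field_simp [hB.ne_zero]

end Weights

section Paths

variable (G : SimpleGraph V) [DecidableRel G.Adj]

def pathsWithin (A : Finset V) (x y : V) : Finset (G.Path x y) :=
  univ.filter fun p => (p : G.Walk x y).support.toFinset ⊆ A

variable {G} {A : Finset V} {x y : V}

theorem pathsWithin_self (hx : x ∈ A) :
    pathsWithin G A x x = {SimpleGraph.Path.nil} := by
  ext p
  simp only [pathsWithin, mem_filter, mem_univ, true_and, mem_singleton]
  constructor
  · intro _
    exact SimpleGraph.Path.loop_eq p
  · rintro rfl
    simpa using hx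

theorem sum_pathsWithin_eq_sum_cons (hx : x ∈ A) (hxy : x ≠ y) (f : G.Walk x y → ℝ)
    (g : ∀ v, G.Walk v y → ℝ)
    (hfg : ∀ v (h : G.Adj x v) (q : G.Walk v y), x ∉ q.support → f (.cons h q) = g v q) :
    ∑ p ∈ pathsWithin G A x y, f p =
      ∑ v ∈ (A.erase x).filter (G.Adj x), ∑ q ∈ pathsWithin G (A.erase x) v y, g v q := by
  have hxq : ∀ z ∈ ((A.erase x).filter (G.Adj x)).sigma
      (fun v => pathsWithin G (A.erase x) v y), x ∉ (z.2 : G.Walk z.1 y).support := by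
    intro z hz hxz
    have hsub := (mem_filter.1 (mem_sigma.1 hz).2).2
    exact notMem_erase x A (hsub (List.mem_toFinset.2 hxz))
  rw [sum_sigma']
  symm
  refine sum_bij (fun z hz => ⟨.cons (mem_filter.1 (mem_sigma.1 hz).1).2 z.2,
      (SimpleGraph.Walk.cons_isPath_iff _ _).2 ⟨z.2.2, hxq z hz⟩⟩) ?_ ?_ ?_ ?_
  · rintro ⟨v, q⟩ hz
    have hsub := (mem_filter.1 (mem_sigma.1 hz).2).2
    simp only [pathsWithin, mem_filter, mem_univ, true_and, SimpleGraph.Walk.support_cons,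
      List.toFinset_cons, insert_subset_iff]
    exact ⟨hx, hsub.trans (erase_subset x A)⟩
  · rintro ⟨v, q⟩ _ ⟨v', q'⟩ _ h
    simp only [Subtype.mk.injEq, SimpleGraph.Walk.cons.injEq] at h
    obtain ⟨rfl, h⟩ := h
    rw [Subtype.ext (eq_of_heq h)]
  · rintro ⟨p, hp⟩ hpA
    cases p with
    | nil => exact absurd rfl hxy
    | @cons _ v _ h q =>
      have hpA := (mem_filter.1 hpA).2
      simp only [SimpleGraph.Walk.support_cons, List.toFinset_cons, insert_subset_iff] at hpA
      have hq := (SimpleGraph.Walk.cons_isPath_iff _ _).1 hp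
      have hqB : q.support.toFinset ⊆ A.erase x := fun u hu =>
        mem_erase.2 ⟨fun hux => hq.2 (hux ▸ List.mem_toFinset.1 hu), hpA.2 hu⟩
      have hv : v ∈ A.erase x := hqB (List.mem_toFinset.2 q.start_mem_support)
      exact ⟨⟨v, q, hq.1⟩, mem_sigma.2 ⟨mem_filter.2 ⟨hv, h⟩, mem_filter.2 ⟨mem_univ _, hqB⟩⟩,
        rfl⟩
  · rintro ⟨v, q⟩ hz
    exact (hfg v _ q (hxq _ hz)).symm

theorem inv_subm_inv_apply_eq_sum_pathsWithin (S : Matrix V V ℝ)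
    (hK : ∀ B : Finset V, IsUnit (subm S⁻¹ B B).det) (hadapt : Adapted S⁻¹ G) (A : Finset V)
    (hx : x ∈ A) (hy : y ∈ A) :
    (subm S⁻¹ A A)⁻¹ ⟨x, hx⟩ ⟨y, hy⟩ =
      ∑ p ∈ pathsWithin G A x y, partialPathWeight S A (p : G.Walk x y) := by
  induction A using Finset.strongInduction generalizing x y with
  | H A ih =>
  obtain rfl | hxy := eq_or_ne x y
  · rw [pathsWithin_self hx, sum_singleton, inv_subm_apply_self _ hx (hK A) (hK _)]
    exact (partialPathWeight_nil S A).symm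
  · have hyB : y ∈ A.erase x := mem_erase.2 ⟨hxy.symm, hy⟩
    have hnadj : ∀ v ∈ A.erase x, ¬ G.Adj x v → S⁻¹ x v = 0 := fun v hv hn =>
      not_not.1 (mt (hadapt x v (ne_of_mem_erase hv).symm) hn)
    rw [inv_subm_apply_of_ne _ hx hy hxy.symm (hK A) (hK _),
      sum_pathsWithin_eq_sum_cons hx hxy _
        (fun v q => _ * (S⁻¹ x v * partialPathWeight S (A.erase x) q))
        (fun v h q hxq => partialPathWeight_cons S A (hK _) h q hxq),
      sum_filter_of_ne fun v hv hne => by_contra fun hn => hne (by simp [hnadj v hv hn]),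
      ← sum_coe_sort (A.erase x), mul_sum]
    refine sum_congr rfl fun v _ => ?_
    rw [ih _ (erase_ssubset hx) v.2 hyB, mul_sum, mul_sum]

end Paths

theorem partial_covariance_decomposition_general {V : Type*} [Fintype V] [DecidableEq V]
    (S : Matrix V V ℝ) (hS : S.PosDef) (G : SimpleGraph V) [DecidableRel G.Adj]
    (hadapt : Adapted S⁻¹ G) (A : Finset V) (x y : V) (hx : x ∈ A) (hy : y ∈ A) :
    pcov S A ⟨x, hx⟩ ⟨y, hy⟩ =
      ∑ p ∈ Finset.univ.filter
        (fun p : G.Path x y => (p : G.Walk x y).support.toFinset ⊆ A),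
        partialPathWeight S A (p : G.Walk x y) := by
  rw [pcov_eq_inv_subm_inv S ((isUnit_iff_isUnit_det _).1 hS.isUnit)
    (isUnit_det_subm_of_posDef hS Aᶜ)]
  exact inv_subm_inv_apply_eq_sum_pathsWithin S (isUnit_det_subm_of_posDef hS.inv) hadapt A
    hx hy

/-- partial covariance decomposition over an induced subgraph:
`σ_{xy·Ā} = Σ_{π ∈ Π^A_xy} ω(π, Σ_{AA·Ā})`. -/
theorem partial_covariance_decomposition {V : Type*} [Fintype V] [DecidableEq V]
    (S : Matrix V V ℝ) (hS : S.PosDef) (G : SimpleGraph V) [DecidableRel G.Adj]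
    (hadapt : Adapted S⁻¹ G) (A : Finset V) (x y : V) (hx : x ∈ A) (hy : y ∈ A)
    (hxy : x ≠ y) :
    pcov S A ⟨x, hx⟩ ⟨y, hy⟩ =
      ∑ p ∈ Finset.univ.filter
        (fun p : G.Path x y => (p : G.Walk x y).support.toFinset ⊆ A),
        partialPathWeight S A (p : G.Walk x y) :=
  partial_covariance_decomposition_general S hS G hadapt A x y hx hy
end

section
/- Factorization of a covariance path weight into a partial covariance weight and an inflation factor. If K = Σ⁻¹ is adapted to G = (V,E), then for any path π in G and any subset A ⊆ V with V(π) ⊆ A, writing P = V(π), it holds that ω(π,Σ) = ω(π, Σ_{AA·Ā}) × IF_P^{Ā}. Consequently sgn(ω(π,Σ)) = sgn(ω(π, Σ_{AA·Ā})) and |ω(π,Σ)| ≥ |ω(π, Σ_{AA·Ā})|, and for nonzero weights the inequality is an equality if and only if IF_P^{Ā} = 1. -/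
open Matrix BigOperators Finset

variable {V : Type*} [Fintype V] [DecidableEq V]

/-!
By Jacobi's complementary-minor identity, every ratio of minors of `K = Σ⁻¹` occurring in the
two weights is a minor of `Σ`: `det K_{P̄P̄} / det K = det Σ_PP` and
`det K_{A∖P,A∖P} / det K_AA = det Σ_{P∪Ā} / det Σ_ĀĀ`. Hence the two weights differ exactly by the
factor `IF_P^Ā`. Fischer's inequality `det Σ_{P∪Ā} ≤ det Σ_PP · det Σ_ĀĀ` gives `IF_P^Ā ≥ 1`, from
which the sign, modulus and equality statements follow. Fischer's inequality itself reduces, via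
the Schur complement, to the monotonicity `det Y ≤ det (Y + Z)` on positive semidefinite matrices.
-/

namespace Matrix

variable {m n : Type*} [Fintype m] [Fintype n] [DecidableEq m] [DecidableEq n]

lemma one_le_det_one_add {W : Matrix n n ℝ} (hW : W.PosSemidef) : 1 ≤ (1 + W).det := by
  set U : Matrix n n ℝ := ↑hW.1.eigenvectorUnitary
  have hdiag : 1 + W = U * diagonal (1 + hW.1.eigenvalues) * star U := by
    conv_lhs => rw [hW.1.spectral_theorem]
    rw [← map_one (Unitary.conjStarAlgAut ℝ _ hW.1.eigenvectorUnitary), ← map_add,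
      ← diagonal_one, diagonal_add]
    rfl
  rw [hdiag, det_mul_comm, ← Matrix.mul_assoc, Unitary.coe_star_mul_self, Matrix.one_mul,
    det_diagonal]
  exact Finset.one_le_prod fun i _ => le_add_of_nonneg_right (hW.eigenvalues_nonneg i)

open scoped MatrixOrder in
lemma det_le_det_add {Y Z : Matrix n n ℝ} (hY : Y.PosSemidef) (hZ : Z.PosSemidef) :
    Y.det ≤ (Y + Z).det := by
  rcases eq_or_ne Y.det 0 with hY0 | hY0
  · exact hY0 ▸ (hY.add hZ).det_nonneg
  -- `Y + Z = Q (1 + Q⁻¹ Z Q⁻¹) Q` with `Q = √Y`.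
  set Q := CFC.sqrt Y
  have hQQ : Q * Q = Y := CFC.sqrt_mul_sqrt_self Y hY.nonneg
  have hQ : IsUnit Q.det := by
    refine isUnit_iff_ne_zero.mpr fun h => hY0 ?_
    rw [← hQQ, det_mul, h, zero_mul]
  have hW : (Q⁻¹ * Z * Q⁻¹).PosSemidef := by
    have := hZ.conjTranspose_mul_mul_same Q⁻¹
    rwa [(CFC.sqrt_nonneg Y).posSemidef.1.inv.eq] at this
  have hsplit : Y + Z = Q * (1 + Q⁻¹ * Z * Q⁻¹) * Q := by
    simp only [Matrix.mul_add, Matrix.add_mul, Matrix.mul_one, ← Matrix.mul_assoc,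
      mul_nonsing_inv _ hQ, Matrix.one_mul, hQQ]
    rw [Matrix.mul_assoc, nonsing_inv_mul _ hQ, Matrix.mul_one]
  rw [hsplit, det_mul, det_mul, ← hQQ, det_mul]
  nlinarith [one_le_det_one_add hW, mul_self_nonneg Q.det]

/-- Fischer's inequality. -/
lemma det_fromBlocks_le_of_posDef {A : Matrix m m ℝ} {B : Matrix m n ℝ} {C : Matrix n m ℝ}
    {D : Matrix n n ℝ} (hM : (fromBlocks A B C D).PosDef) :
    (fromBlocks A B C D).det ≤ A.det * D.det := by
  obtain rfl : C = Bᴴ := ((isHermitian_fromBlocks_iff.mp hM.1).2.1).symm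
  have hD : D.PosDef := hM.submatrix Sum.inr_injective
  let := hD.isUnit.invertible
  have hSchur : (A - B * D⁻¹ * Bᴴ).PosSemidef := (PosDef.fromBlocks₂₂ A B hD).mp hM.posSemidef
  have hle := det_le_det_add hSchur (hD.inv.posSemidef.mul_mul_conjTranspose_same B)
  rw [sub_add_cancel] at hle
  rw [det_fromBlocks₂₂, invOf_eq_nonsing_inv, mul_comm A.det]
  exact mul_le_mul_of_nonneg_left hle hD.det_pos.le

lemma det_mul_det_toBlocks₂₂_of_mul_eq_one {R : Type*} [CommRing R]
    {M N : Matrix (m ⊕ n) (m ⊕ n) R} (h : M * N = 1) :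
    M.det * N.toBlocks₂₂.det = M.toBlocks₁₁.det := by
  have hMN := h
  rw [← fromBlocks_toBlocks M, ← fromBlocks_toBlocks N, fromBlocks_multiply, ← fromBlocks_one,
    fromBlocks_inj] at hMN
  have hcol : M * fromBlocks 1 N.toBlocks₁₂ 0 N.toBlocks₂₂
      = fromBlocks M.toBlocks₁₁ 0 M.toBlocks₂₁ 1 := by
    rw [← hMN.2.1, ← hMN.2.2.2]
    conv_lhs => rw [← fromBlocks_toBlocks M, fromBlocks_multiply]
    simp
  have := congrArg det hcol
  rwa [det_mul, det_fromBlocks_zero₂₁, det_fromBlocks_zero₁₂, det_one, det_one, one_mul,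
    mul_one] at this

end Matrix

lemma Real.sign_mul_of_pos {a c : ℝ} (hc : 0 < c) : Real.sign (a * c) = Real.sign a := by
  rcases lt_trichotomy a 0 with ha | rfl | ha
  · rw [Real.sign_of_neg (mul_neg_of_neg_of_pos ha hc), Real.sign_of_neg ha]
  · rw [zero_mul]
  · rw [Real.sign_of_pos (mul_pos ha hc), Real.sign_of_pos ha]

omit [Fintype V] [DecidableEq V] in
lemma posDef_subm {S : Matrix V V ℝ} (hS : S.PosDef) (B : Finset V) : (subm S B B).PosDef :=
  hS.submatrix Subtype.val_injective

/-- Jacobi's complementary-minor identity. -/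
lemma det_subm_inv_div_det_inv {S : Matrix V V ℝ} (hS : IsUnit S.det) (B : Finset V) :
    (subm S⁻¹ B B).det / S⁻¹.det = (subm S Bᶜ Bᶜ).det := by
  let e : ↥Bᶜ ⊕ ↥B ≃ V := (Equiv.Finset.union Bᶜ B disjoint_compl_left).trans
    (Equiv.subtypeUnivEquiv fun v => by simp [em'])
  have hJ : S.det * (subm S⁻¹ B B).det = (subm S Bᶜ Bᶜ).det := by
    have := Matrix.det_mul_det_toBlocks₂₂_of_mul_eq_one (M := S.submatrix e e)
      (N := S⁻¹.submatrix e e) (by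
        rw [Matrix.submatrix_mul_equiv, Matrix.mul_nonsing_inv _ hS, Matrix.submatrix_one_equiv])
    rwa [Matrix.det_submatrix_equiv_self] at this
  rw [← hJ, Matrix.det_nonsing_inv, Ring.inverse_eq_inv, div_inv_eq_mul, mul_comm]

theorem pathWeight_eq_partialPathWeight_mul_inflF {S : Matrix V V ℝ} (hS : S.PosDef)
    (A : Finset V) {G : SimpleGraph V} {x y : V} (p : G.Walk x y) :
    pathWeight S p = partialPathWeight S A p * inflF S p.support.toFinset Aᶜ := by
  set P := p.support.toFinset
  have hSdet : IsUnit S.det := hS.det_pos.ne'.isUnit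
  have hP : (subm S⁻¹ Pᶜ Pᶜ).det / S⁻¹.det = (subm S P P).det := by
    rw [det_subm_inv_div_det_inv hSdet, compl_compl]
  have hAP : (subm S⁻¹ (A \ P) (A \ P)).det / (subm S⁻¹ A A).det
      = (subm S (P ∪ Aᶜ) (P ∪ Aᶜ)).det / (subm S Aᶜ Aᶜ).det := by
    rw [← div_div_div_cancel_right₀ hS.inv.det_pos.ne', det_subm_inv_div_det_inv hSdet,
      det_subm_inv_div_det_inv hSdet, compl_sdiff, himp_eq, Finset.sup_eq_union]
  have hAc := (posDef_subm hS Aᶜ).det_pos.ne'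
  have hPAc := (posDef_subm hS (P ∪ Aᶜ)).det_pos.ne'
  rw [pathWeight, partialPathWeight, inflF, hP, hAP]
  field_simp

omit [Fintype V] in
lemma one_le_inflF {S : Matrix V V ℝ} (hS : S.PosDef) {B C : Finset V} (h : Disjoint B C) :
    1 ≤ inflF S B C := by
  let e := Equiv.Finset.union B C h
  have hblocks : (subm S (B ∪ C) (B ∪ C)).submatrix e e
      = Matrix.fromBlocks (subm S B B) (subm S B C) (subm S C B) (subm S C C) := by
    ext (i | i) (j | j) <;> rfl
  have hM := (posDef_subm hS (B ∪ C)).submatrix e.injective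
  rw [hblocks] at hM
  rw [inflF, one_le_div (posDef_subm hS _).det_pos, ← Matrix.det_submatrix_equiv_self e, hblocks]
  exact Matrix.det_fromBlocks_le_of_posDef hM

theorem weight_factorization_general {V : Type*} [Fintype V] [DecidableEq V]
    (S : Matrix V V ℝ) (hS : S.PosDef) (G : SimpleGraph V) {x y : V} (p : G.Walk x y)
    (A : Finset V) (hPA : p.support.toFinset ⊆ A) :
    pathWeight S p = partialPathWeight S A p * inflF S p.support.toFinset Aᶜ ∧
    Real.sign (pathWeight S p) = Real.sign (partialPathWeight S A p) ∧
    |partialPathWeight S A p| ≤ |pathWeight S p| ∧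
    (pathWeight S p ≠ 0 →
      (|pathWeight S p| = |partialPathWeight S A p| ↔
        inflF S p.support.toFinset Aᶜ = 1)) := by
  have hfac := pathWeight_eq_partialPathWeight_mul_inflF hS A p
  have hIF : 1 ≤ inflF S p.support.toFinset Aᶜ :=
    one_le_inflF hS (disjoint_compl_right_iff.mpr hPA)
  have habs : |pathWeight S p| = |partialPathWeight S A p| * inflF S p.support.toFinset Aᶜ := by
    rw [hfac, abs_mul, abs_of_pos (zero_lt_one.trans_le hIF)]
  refine ⟨hfac, hfac ▸ Real.sign_mul_of_pos (zero_lt_one.trans_le hIF), ?_, fun hne => ?_⟩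
  · rw [habs]
    exact le_mul_of_one_le_right (abs_nonneg _) hIF
  · have hpartial : |partialPathWeight S A p| ≠ 0 := by
      rw [abs_ne_zero]
      intro h
      exact hne (by rw [hfac, h, zero_mul])
    rw [habs, mul_eq_left₀ hpartial]

/-- factorization of a covariance path weight into a partial covariance
weight and an inflation factor: `ω(π,Σ) = ω(π, Σ_{AA·Ā}) × IF_P^{Ā}`, with the
consequent sign equality, absolute-value inequality, and equality criterion. -/
theorem weight_factorization {V : Type*} [Fintype V] [DecidableEq V]
    (S : Matrix V V ℝ) (hS : S.PosDef) (G : SimpleGraph V) [DecidableRel G.Adj]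
    (hadapt : Adapted S⁻¹ G) {x y : V} (hxy : x ≠ y) (p : G.Walk x y) (hp : p.IsPath)
    (A : Finset V) (hPA : p.support.toFinset ⊆ A) :
    pathWeight S p = partialPathWeight S A p * inflF S p.support.toFinset Aᶜ ∧
    Real.sign (pathWeight S p) = Real.sign (partialPathWeight S A p) ∧
    |partialPathWeight S A p| ≤ |pathWeight S p| ∧
    (pathWeight S p ≠ 0 →
      (|pathWeight S p| = |partialPathWeight S A p| ↔
        inflF S p.support.toFinset Aᶜ = 1)) :=
  weight_factorization_general S hS G p A hPA
end

section
/- Explicit form of inflated correlation path weights. Let K = Σ⁻¹ be adapted to G = (V,E), let Φ^V be the inflated correlation matrix of X_V, and let π be a path between x and y in G with P = V(π). Then ω(π, Φ^V) = det(Φ^V_PP) · ∏_{{u,v}∈E(π)} ρ_{uv·V∖{u,v}}, and the partial weight satisfies ω(π, Φ^P_{PP·P̄}) = det(Φ^P_{PP·P̄}) · ∏_{{u,v}∈E(π)} ρ_{uv·V∖{u,v}}; moreover ω(π, Φ^V) = ω(π, Φ^P_{PP·P̄}) × IF_P. -/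
open Matrix BigOperators Finset

variable {V : Type*} [Fintype V] [DecidableEq V]

/-!
Write `K = Σ⁻¹` and `D = diag(K)^{1/2}`, so that `Φ^V = D Σ D` and `(Φ^V)⁻¹ = D⁻¹ K D⁻¹ = I − R`.
Jacobi's complementary minor identity `det (Φ^V)⁻¹_{P̄P̄} = det Φ^V_PP / det Φ^V` turns the
determinant factor of `ω(π, Φ^V)` into `det Φ^V_PP`; the edge factors are `−ρ_uv`, and a path
has one edge fewer than vertices, so the signs cancel. Since `(Φ^P_{PP·P̄})⁻¹ = (Φ^V)⁻¹_PP`, the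
same computation in `G_P` gives the second formula. Finally, the Schur determinant formula gives
`det Φ^V_PP = det Φ^P_{PP·P̄} · IF_P(Φ^V)`, and the inflation factor is unchanged under the
diagonal congruence `Σ ↦ D Σ D`.
-/

def sumComplEquiv (P : Finset V) : ↥P ⊕ ↥(Pᶜ : Finset V) ≃ V :=
  (Equiv.sumCongr (Equiv.refl ↥P) (Equiv.subtypeEquivRight fun _ => Finset.mem_compl)).trans
    (Equiv.sumCompl (· ∈ P))

lemma submatrix_sumComplEquiv (M : Matrix V V ℝ) (P : Finset V) :
    M.submatrix (sumComplEquiv P) (sumComplEquiv P) =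
      fromBlocks (subm M P P) (subm M P Pᶜ) (subm M Pᶜ P) (subm M Pᶜ Pᶜ) := by
  ext (i | i) (j | j) <;> rfl

lemma det_subm_union_compl (M : Matrix V V ℝ) (P : Finset V) :
    (subm M (P ∪ Pᶜ) (P ∪ Pᶜ)).det = M.det :=
  det_submatrix_equiv_self (Equiv.subtypeUnivEquiv fun _ => by simp) M

lemma posDef_subm_s16 {ι : Type*} {M : Matrix ι ι ℝ} (hM : M.PosDef) (A : Finset ι) :
    (subm M A A).PosDef :=
  hM.submatrix Subtype.val_injective

section SchurComplement

variable {M : Matrix V V ℝ} {P : Finset V}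

lemma det_subm_compl_mul_det_pcov (hD : IsUnit (subm M Pᶜ Pᶜ).det) :
    (subm M Pᶜ Pᶜ).det * (pcov M P).det = M.det := by
  let _ := (subm M Pᶜ Pᶜ).invertibleOfIsUnitDet hD
  rw [← det_submatrix_equiv_self (sumComplEquiv P), submatrix_sumComplEquiv, det_fromBlocks₂₂,
    invOf_eq_nonsing_inv]
  rfl

lemma isUnit_det_pcov (hM : IsUnit M.det) (hD : IsUnit (subm M Pᶜ Pᶜ).det) :
    IsUnit (pcov M P).det := by
  rw [← det_subm_compl_mul_det_pcov hD] at hM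
  exact isUnit_of_mul_isUnit_right hM

lemma inv_pcov (hM : IsUnit M.det) (hD : IsUnit (subm M Pᶜ Pᶜ).det) :
    (pcov M P)⁻¹ = subm M⁻¹ P P := by
  let _ := (subm M Pᶜ Pᶜ).invertibleOfIsUnitDet hD
  have hschur : subm M P P - subm M P Pᶜ * ⅟(subm M Pᶜ Pᶜ) * subm M Pᶜ P = pcov M P := by
    rw [invOf_eq_nonsing_inv]; rfl
  let _ := Matrix.invertibleOfIsUnitDet _ (hschur ▸ isUnit_det_pcov hM hD)
  let _ := Matrix.invertibleOfIsUnitDet _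
    (by rwa [← submatrix_sumComplEquiv, det_submatrix_equiv_self] : IsUnit
      (fromBlocks (subm M P P) (subm M P Pᶜ) (subm M Pᶜ P) (subm M Pᶜ Pᶜ)).det)
  have hblocks := congrArg toBlocks₁₁ (invOf_fromBlocks₂₂_eq (subm M P P) (subm M P Pᶜ)
    (subm M Pᶜ P) (subm M Pᶜ Pᶜ))
  rw [invOf_eq_nonsing_inv, ← submatrix_sumComplEquiv, inv_submatrix_equiv,
    submatrix_sumComplEquiv, toBlocks_fromBlocks₁₁, toBlocks_fromBlocks₁₁,
    invOf_eq_nonsing_inv, hschur] at hblocks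
  exact hblocks.symm

/-- Jacobi's complementary minor identity. -/
lemma det_subm_inv_compl (hM : IsUnit M.det) (hK : IsUnit (subm M⁻¹ Pᶜ Pᶜ).det) :
    (subm M⁻¹ Pᶜ Pᶜ).det = M⁻¹.det * (subm M P P).det := by
  have hK' := isUnit_nonsing_inv_det M hM
  have hinv := inv_pcov hK' hK
  rw [nonsing_inv_nonsing_inv M hM] at hinv
  rw [← hinv, det_nonsing_inv (A := pcov M⁻¹ P), Ring.inverse_eq_inv',
    ← det_subm_compl_mul_det_pcov hK, mul_inv_cancel_right₀ (isUnit_det_pcov hK' hK).ne_zero]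

lemma det_subm_eq_det_pcov_mul_inflF (hM : IsUnit M.det) (hD : IsUnit (subm M Pᶜ Pᶜ).det) :
    (subm M P P).det = (pcov M P).det * inflF M P Pᶜ := by
  rw [inflF, det_subm_union_compl, ← det_subm_compl_mul_det_pcov hD]
  field_simp [hD.ne_zero, (isUnit_det_pcov hM hD).ne_zero]

end SchurComplement

lemma subm_diagonal_mul_mul_diagonal (d : V → ℝ) (M : Matrix V V ℝ) (A : Finset V) :
    subm (diagonal d * M * diagonal d) A A =
      diagonal (fun i : A => d i) * subm M A A * diagonal (fun i : A => d i) := by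
  ext i j
  simp [subm, diagonal_mul, mul_diagonal]

lemma det_subm_diagonal_mul_mul_diagonal (d : V → ℝ) (M : Matrix V V ℝ) (A : Finset V) :
    (subm (diagonal d * M * diagonal d) A A).det = (∏ u ∈ A, d u) ^ 2 * (subm M A A).det := by
  rw [subm_diagonal_mul_mul_diagonal, det_mul, det_mul, det_diagonal,
    Finset.prod_coe_sort A d]
  ring

lemma inflF_diagonal_mul_mul_diagonal {d : V → ℝ} (hd : ∀ u, d u ≠ 0) (M : Matrix V V ℝ)
    {A B : Finset V} (hAB : Disjoint A B) :
    inflF (diagonal d * M * diagonal d) A B = inflF M A B := by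
  have hA : (∏ u ∈ A, d u) ^ 2 ≠ 0 := pow_ne_zero _ (Finset.prod_ne_zero_iff.mpr fun _ _ => hd _)
  have hB : (∏ u ∈ B, d u) ^ 2 ≠ 0 := pow_ne_zero _ (Finset.prod_ne_zero_iff.mpr fun _ _ => hd _)
  simp only [inflF, det_subm_diagonal_mul_mul_diagonal, Finset.prod_union hAB, mul_pow]
  rw [mul_mul_mul_comm, mul_div_mul_left _ _ (mul_ne_zero hA hB)]

lemma corrScale_eq {ι : Type*} [Fintype ι] [DecidableEq ι] (M : Matrix ι ι ℝ) :
    corrScale M =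
      diagonal (fun i => (Real.sqrt (M i i))⁻¹) * M *
        diagonal (fun i => (Real.sqrt (M i i))⁻¹) := by
  ext i j
  simp only [corrScale, of_apply, diagonal_mul, mul_diagonal]
  rw [div_eq_mul_inv, mul_inv]
  ring

lemma inflCorr_eq (S : Matrix V V ℝ) :
    inflCorr S = diagonal (fun u => Real.sqrt (S⁻¹ u u)) * S *
      diagonal (fun u => Real.sqrt (S⁻¹ u u)) := by
  ext u v
  simp [inflCorr, diagonal_mul, mul_diagonal]

lemma inflCorr_inv {S : Matrix V V ℝ} (hK : ∀ u, 0 < S⁻¹ u u) :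
    (inflCorr S)⁻¹ = corrScale S⁻¹ := by
  have hD : (diagonal fun u => Real.sqrt (S⁻¹ u u))⁻¹ =
      diagonal fun u => (Real.sqrt (S⁻¹ u u))⁻¹ := by
    refine inv_eq_left_inv ?_
    rw [diagonal_mul_diagonal, ← diagonal_one]
    exact congrArg diagonal (funext fun u => inv_mul_cancel₀ (Real.sqrt_pos.mpr (hK u)).ne')
  rw [inflCorr_eq, Matrix.mul_inv_rev, Matrix.mul_inv_rev, hD, corrScale_eq, mul_assoc]

lemma inflCorr_posDef {S : Matrix V V ℝ} (hS : S.PosDef) : (inflCorr S).PosDef := by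
  have hD : IsUnit (diagonal fun u => Real.sqrt (S⁻¹ u u)) :=
    isUnit_diagonal.mpr <| Pi.isUnit_iff.mpr fun _ => (Real.sqrt_pos.mpr hS.inv.diag_pos).ne'.isUnit
  have := hD.posDef_star_right_conjugate_iff.mpr hS
  rwa [star_eq_conjTranspose, diagonal_conjTranspose, star_trivial, ← inflCorr_eq] at this

section Walks

variable {W : Type*} [DecidableEq W] {G : SimpleGraph W} {x y : W} {p : G.Walk x y}

lemma SimpleGraph.Walk.IsPath.card_support_toFinset (hp : p.IsPath) :
    p.support.toFinset.card = p.length + 1 := by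
  rw [List.toFinset_card_of_nodup hp.support_nodup, length_support]

lemma SimpleGraph.Walk.IsPath.neg_one_pow_mul_prod_darts (hp : p.IsPath) (f : W → W → ℝ) :
    (-1 : ℝ) ^ (p.support.toFinset.card + 1) * (p.darts.map fun d => f d.fst d.snd).prod =
      (p.darts.map fun d => -f d.fst d.snd).prod := by
  have hneg : (p.darts.map fun d => -f d.fst d.snd) =
      (p.darts.map fun d => f d.fst d.snd).map Neg.neg := by
    rw [List.map_map]; rfl
  rw [hneg, List.prod_map_neg, List.length_map, length_darts,
    hp.card_support_toFinset, pow_add (-1 : ℝ) p.length 2]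
  norm_num

lemma subPathWeight_eq_of_inv_apply {P : Finset W} (M : Matrix P P ℝ)
    (hP : ∀ v ∈ p.support, v ∈ P) (f : W → W → ℝ) (hf : ∀ u v : P, M⁻¹ u v = f u v) :
    subPathWeight M p hP = (-1 : ℝ) ^ (p.support.toFinset.card + 1) * (1 / M⁻¹.det) *
      (p.darts.map fun d => f d.fst d.snd).prod := by
  rw [subPathWeight, ← List.attach_map_val (l := p.darts) (f := fun d => f d.fst d.snd)]
  exact congrArg (_ * List.prod ·) (List.map_congr_left fun d _ => hf _ _)

end Walks

section PathWeights

variable {G : SimpleGraph V} {x y : V} {p : G.Walk x y}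

lemma pathWeight_eq_det_subm_mul {Γ : Matrix V V ℝ} (hΓ : Γ.PosDef) (hp : p.IsPath) :
    pathWeight Γ p = (subm Γ p.support.toFinset p.support.toFinset).det *
      (p.darts.map fun d => -Γ⁻¹ d.fst d.snd).prod := by
  rw [pathWeight,
    det_subm_inv_compl hΓ.det_pos.ne'.isUnit (posDef_subm_s16 hΓ.inv _).det_pos.ne'.isUnit,
    mul_div_cancel_left₀ _ hΓ.inv.det_pos.ne', mul_comm ((-1 : ℝ) ^ _), mul_assoc]
  exact congrArg _ (hp.neg_one_pow_mul_prod_darts _)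

lemma subPathWeight_pcov_eq {Γ : Matrix V V ℝ} (hΓ : Γ.PosDef) (hp : p.IsPath)
    (hP : ∀ v ∈ p.support, v ∈ p.support.toFinset) :
    subPathWeight (pcov Γ p.support.toFinset) p hP = (pcov Γ p.support.toFinset).det *
      (p.darts.map fun d => -Γ⁻¹ d.fst d.snd).prod := by
  have hinv := inv_pcov (P := p.support.toFinset) hΓ.det_pos.ne'.isUnit
    (posDef_subm_s16 hΓ _).det_pos.ne'.isUnit
  rw [subPathWeight_eq_of_inv_apply _ hP (Γ⁻¹ · ·) fun u v => by rw [hinv]; rfl,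
    det_nonsing_inv, Ring.inverse_eq_inv', one_div, inv_inv, mul_comm ((-1 : ℝ) ^ _), mul_assoc]
  exact congrArg _ (hp.neg_one_pow_mul_prod_darts _)

end PathWeights

theorem inflated_correlation_weight_explicit_general {V : Type*} [Fintype V] [DecidableEq V]
    (S : Matrix V V ℝ) (hS : S.PosDef) (G : SimpleGraph V)
    {x y : V} (p : G.Walk x y) (hp : p.IsPath) :
    pathWeight (inflCorr S) p =
      (subm (inflCorr S) p.support.toFinset p.support.toFinset).det * prodPartialCorr S p ∧
    subPathWeight (pcov (inflCorr S) p.support.toFinset) p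
        (fun v hv => List.mem_toFinset.mpr hv) =
      (pcov (inflCorr S) p.support.toFinset).det * prodPartialCorr S p ∧
    pathWeight (inflCorr S) p =
      subPathWeight (pcov (inflCorr S) p.support.toFinset) p
          (fun v hv => List.mem_toFinset.mpr hv) *
        inflF S p.support.toFinset p.support.toFinsetᶜ := by
  have hK : ∀ u, 0 < S⁻¹ u u := fun _ => hS.inv.diag_pos
  have hΦ := inflCorr_posDef hS
  have hρ : prodPartialCorr S p =
      (p.darts.map fun d => -(inflCorr S)⁻¹ d.fst d.snd).prod := by
    rw [prodPartialCorr, inflCorr_inv hK]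
  have hIF : inflF (inflCorr S) p.support.toFinset p.support.toFinsetᶜ =
      inflF S p.support.toFinset p.support.toFinsetᶜ := by
    rw [inflCorr_eq, inflF_diagonal_mul_mul_diagonal (fun u => (Real.sqrt_pos.mpr (hK u)).ne') S
      disjoint_compl_right]
  have hdet := det_subm_eq_det_pcov_mul_inflF hΦ.det_pos.ne'.isUnit
    (posDef_subm_s16 hΦ p.support.toFinsetᶜ).det_pos.ne'.isUnit
  rw [hρ, pathWeight_eq_det_subm_mul hΦ hp, subPathWeight_pcov_eq hΦ hp, hdet, hIF]
  exact ⟨rfl, rfl, by ring⟩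

/-- explicit form of inflated correlation path weights:
`ω(π, Φ^V) = det(Φ^V_PP) ∏ ρ_{uv·V∖{u,v}}`,
`ω(π, Φ^P_{PP·P̄}) = det(Φ^P_{PP·P̄}) ∏ ρ_{uv·V∖{u,v}}`, and
`ω(π, Φ^V) = ω(π, Φ^P_{PP·P̄}) × IF_P`. -/
theorem inflated_correlation_weight_explicit {V : Type*} [Fintype V] [DecidableEq V]
    (S : Matrix V V ℝ) (hS : S.PosDef) (G : SimpleGraph V) [DecidableRel G.Adj]
    (hadapt : Adapted S⁻¹ G) {x y : V} (hxy : x ≠ y) (p : G.Walk x y) (hp : p.IsPath) :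
    pathWeight (inflCorr S) p =
      (subm (inflCorr S) p.support.toFinset p.support.toFinset).det * prodPartialCorr S p ∧
    subPathWeight (pcov (inflCorr S) p.support.toFinset) p
        (fun v hv => List.mem_toFinset.mpr hv) =
      (pcov (inflCorr S) p.support.toFinset).det * prodPartialCorr S p ∧
    pathWeight (inflCorr S) p =
      subPathWeight (pcov (inflCorr S) p.support.toFinset) p
          (fun v hv => List.mem_toFinset.mpr hv) *
        inflF S p.support.toFinset p.support.toFinsetᶜ :=
  inflated_correlation_weight_explicit_general S hS G p hp
end

section
/- Uniform bounds for inflated correlation path weights. Let K = Σ⁻¹ be adapted to G = (V,E) and let Φ^V be the inflated correlation matrix of X_V. Then for every path π between any two distinct vertices x and y in G it holds that −det(Φ^V) ≤ ω(π, Φ^V) ≤ det(Φ^V), and ω(π, Φ^V)/det(Φ^V) = φ(π,R), where φ(π,R) = det((I−R)_{P̄P̄}) · ∏_{{u,v}∈E(π)} ρ_{uv·V∖{u,v}} with P = V(π). -/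
open Matrix BigOperators Finset

variable {V : Type*} [Fintype V] [DecidableEq V]

/-!
Write `D = diag(K)^{1/2}`. Then `Φ^V = D Σ D` and `I − R = D⁻¹ K D⁻¹` are inverse
to each other, and both are positive definite. Since `θ_uv = −ρ_uv` and a path has
`|P| = |E(π)| + 1`, the signs in `ω(π, Φ^V)` combine to `ω(π, Φ^V) = det Φ^V · φ(π, R)`.
Finally `|φ(π, R)| ≤ 1` because `I − R` is positive definite with unit diagonal: its
principal minors lie in `(0, 1]` (sum `log λ ≤ λ − 1` over the eigenvalues, whose sum is
the trace) and its entries lie in `[−1, 1]` (the `2 × 2` principal minors are positive).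
-/

theorem List.abs_prod_le_one {R : Type*} [Ring R] [LinearOrder R] [IsStrictOrderedRing R]
    {l : List R} (h : ∀ a ∈ l, |a| ≤ 1) : |l.prod| ≤ 1 := by
  induction l with
  | nil => simp
  | cons a l ih =>
    rw [List.forall_mem_cons] at h
    rw [List.prod_cons, abs_mul]
    exact mul_le_one₀ h.1 (abs_nonneg _) (ih h.2)

namespace Matrix.PosDef

variable {ι : Type*} {N : Matrix ι ι ℝ}

theorem det_le_one_of_diag_eq_one [Fintype ι] [DecidableEq ι] (hN : N.PosDef)
    (hdiag : ∀ i, N i i = 1) : N.det ≤ 1 := by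
  have hpos : ∀ i, 0 < hN.isHermitian.eigenvalues i := hN.eigenvalues_pos
  have hdet : N.det = ∏ i, hN.isHermitian.eigenvalues i := by
    simpa using hN.isHermitian.det_eq_prod_eigenvalues
  have htrace : ∑ i, hN.isHermitian.eigenvalues i = Fintype.card ι := by
    have := hN.isHermitian.trace_eq_sum_eigenvalues
    simp only [trace, diag, hdiag, sum_const, card_univ, nsmul_eq_mul, mul_one] at this
    simpa using this.symm
  have hlog : Real.log N.det ≤ 0 := calc
    Real.log N.det = ∑ i, Real.log (hN.isHermitian.eigenvalues i) := by
      rw [hdet, Real.log_prod fun i _ => (hpos i).ne']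
    _ ≤ ∑ i, (hN.isHermitian.eigenvalues i - 1) :=
      sum_le_sum fun i _ => Real.log_le_sub_one_of_pos (hpos i)
    _ = 0 := by simp [sum_sub_distrib, htrace]
  exact (Real.log_nonpos_iff hN.det_pos.le).mp hlog

theorem abs_apply_le_one_of_diag_eq_one (hN : N.PosDef) (hdiag : ∀ i, N i i = 1) (i j : ι) :
    |N i j| ≤ 1 := by
  rcases eq_or_ne i j with rfl | hij
  · simp [hdiag]
  have hinj : Function.Injective ![i, j] := by
    intro a b hab
    fin_cases a <;> fin_cases b <;> simp_all [hij.symm]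
  have hminor := (hN.submatrix hinj).det_pos
  have hsymm : N j i = N i j := by simpa using congrFun (congrFun hN.isHermitian i) j
  simp only [det_fin_two, submatrix_apply, cons_val_zero, cons_val_one, hdiag, hsymm] at hminor
  rw [abs_le_one_iff_mul_self_le_one]
  linarith

theorem diagonal_mul_mul_diagonal [Fintype ι] [DecidableEq ι] (hN : N.PosDef) {d : ι → ℝ}
    (hd : ∀ i, d i ≠ 0) :
    (diagonal d * N * diagonal d).PosDef := by
  have hunit : IsUnit (diagonal d) :=
    isUnit_diagonal.mpr (Pi.isUnit_iff.mpr fun i => (hd i).isUnit)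
  simpa [star_eq_conjTranspose, diagonal_conjTranspose] using
    (IsUnit.posDef_star_left_conjugate_iff hunit).mpr hN

end Matrix.PosDef

theorem corrScale_eq_diagonal_mul_mul_diagonal {ι : Type*} [Fintype ι] [DecidableEq ι]
    (M : Matrix ι ι ℝ) :
    corrScale M =
      diagonal (fun i => (√(M i i))⁻¹) * M * diagonal (fun i => (√(M i i))⁻¹) := by
  ext i j
  simp only [corrScale, of_apply, mul_diagonal, diagonal_mul, div_eq_mul_inv, mul_inv]
  ring

theorem corrScale_apply_self {ι : Type*} {M : Matrix ι ι ℝ} {i : ι} (hi : 0 < M i i) :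
    corrScale M i i = 1 := by
  rw [corrScale, of_apply, Real.mul_self_sqrt hi.le, div_self hi.ne']

theorem Matrix.PosDef.corrScale {ι : Type*} [Fintype ι] [DecidableEq ι] {M : Matrix ι ι ℝ}
    (hM : M.PosDef) : (_root_.corrScale M).PosDef := by
  rw [corrScale_eq_diagonal_mul_mul_diagonal]
  exact hM.diagonal_mul_mul_diagonal fun i => inv_ne_zero (Real.sqrt_pos.mpr hM.diag_pos).ne'

theorem inflCorr_eq_diagonal_mul_mul_diagonal (S : Matrix V V ℝ) :
    inflCorr S = diagonal (fun v => √(S⁻¹ v v)) * S * diagonal (fun v => √(S⁻¹ v v)) := by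
  ext u v
  simp only [inflCorr, of_apply, mul_diagonal, diagonal_mul]

theorem Matrix.PosDef.inflCorr {S : Matrix V V ℝ} (hS : S.PosDef) :
    (_root_.inflCorr S).PosDef := by
  rw [inflCorr_eq_diagonal_mul_mul_diagonal]
  exact hS.diagonal_mul_mul_diagonal fun v => (Real.sqrt_pos.mpr hS.inv.diag_pos).ne'

theorem inv_inflCorr {S : Matrix V V ℝ} (hS : S.PosDef) : (inflCorr S)⁻¹ = corrScale S⁻¹ := by
  refine inv_eq_right_inv ?_
  rw [inflCorr_eq_diagonal_mul_mul_diagonal, corrScale_eq_diagonal_mul_mul_diagonal]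
  set D := diagonal fun v => √(S⁻¹ v v)
  set D' := diagonal fun v => (√(S⁻¹ v v))⁻¹
  have hD : D * D' = 1 := by
    rw [diagonal_mul_diagonal, ← diagonal_one]
    exact congrArg diagonal <| funext fun v =>
      mul_inv_cancel₀ (Real.sqrt_pos.mpr hS.inv.diag_pos).ne'
  have hSK : S * S⁻¹ = 1 := mul_nonsing_inv S hS.det_pos.ne'.isUnit
  calc D * S * D * (D' * S⁻¹ * D') = D * (S * (D * D') * S⁻¹) * D' := by simp only [mul_assoc]
    _ = 1 := by rw [hD, mul_one, hSK, mul_one, hD]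

theorem pathWeight_eq_det_mul (Γ : Matrix V V ℝ) {G : SimpleGraph V} {x y : V}
    {p : G.Walk x y} (hp : p.IsPath) :
    pathWeight Γ p = Γ.det * ((subm Γ⁻¹ p.support.toFinsetᶜ p.support.toFinsetᶜ).det *
      (p.darts.map fun d => -Γ⁻¹ d.toProd.1 d.toProd.2).prod) := by
  have hcard : p.support.toFinset.card = p.length + 1 := by
    rw [List.toFinset_card_of_nodup hp.support_nodup, SimpleGraph.Walk.length_support]
  have hneg : (p.darts.map fun d => -Γ⁻¹ d.toProd.1 d.toProd.2).prod =
      (-1) ^ p.length * (p.darts.map fun d => Γ⁻¹ d.toProd.1 d.toProd.2).prod := by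
    have := List.prod_map_neg (p.darts.map fun d => Γ⁻¹ d.toProd.1 d.toProd.2)
    rwa [List.map_map, List.length_map, SimpleGraph.Walk.length_darts] at this
  rw [pathWeight, hcard, hneg, det_nonsing_inv, Ring.inverse_eq_inv, div_inv_eq_mul,
    pow_succ]
  ring

theorem abs_phiWeight_le_one {S : Matrix V V ℝ} (hS : S.PosDef) {G : SimpleGraph V}
    {x y : V} (p : G.Walk x y) : |phiWeight S p| ≤ 1 := by
  have hR := hS.inv.corrScale
  have hdiag : ∀ v, corrScale S⁻¹ v v = 1 := fun _ => corrScale_apply_self hS.inv.diag_pos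
  have hminor : (subm (corrScale S⁻¹) p.support.toFinsetᶜ p.support.toFinsetᶜ).PosDef :=
    hR.submatrix Subtype.val_injective
  have hcorr : |prodPartialCorr S p| ≤ 1 := by
    refine List.abs_prod_le_one ?_
    simp only [List.mem_map]
    rintro _ ⟨d, -, rfl⟩
    simpa using hR.abs_apply_le_one_of_diag_eq_one hdiag d.toProd.1 d.toProd.2
  rw [phiWeight, abs_mul, abs_of_pos hminor.det_pos]
  exact mul_le_one₀ (hminor.det_le_one_of_diag_eq_one fun i => hdiag i) (abs_nonneg _)
    hcorr

theorem pathWeight_inflCorr {S : Matrix V V ℝ} (hS : S.PosDef) {G : SimpleGraph V}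
    {x y : V} {p : G.Walk x y} (hp : p.IsPath) :
    pathWeight (inflCorr S) p = (inflCorr S).det * phiWeight S p := by
  rw [pathWeight_eq_det_mul _ hp, inv_inflCorr hS, phiWeight, prodPartialCorr]

theorem inflated_correlation_weight_bounds_general {V : Type*} [Fintype V] [DecidableEq V]
    (S : Matrix V V ℝ) (hS : S.PosDef) (G : SimpleGraph V)
    {x y : V} (p : G.Walk x y) (hp : p.IsPath) :
    -(inflCorr S).det ≤ pathWeight (inflCorr S) p ∧
    pathWeight (inflCorr S) p ≤ (inflCorr S).det ∧
    pathWeight (inflCorr S) p / (inflCorr S).det = phiWeight S p := by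
  have hdet : 0 < (inflCorr S).det := hS.inflCorr.det_pos
  have hφ := abs_le.mp (abs_phiWeight_le_one hS p)
  rw [pathWeight_inflCorr hS hp]
  refine ⟨by nlinarith, by nlinarith, mul_div_cancel_left₀ _ hdet.ne'⟩

/-- uniform bounds for inflated correlation path weights:
`−det(Φ^V) ≤ ω(π, Φ^V) ≤ det(Φ^V)` and `ω(π, Φ^V)/det(Φ^V) = φ(π,R)`. -/
theorem inflated_correlation_weight_bounds {V : Type*} [Fintype V] [DecidableEq V]
    (S : Matrix V V ℝ) (hS : S.PosDef) (G : SimpleGraph V) [DecidableRel G.Adj]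
    (hadapt : Adapted S⁻¹ G) {x y : V} (hxy : x ≠ y) (p : G.Walk x y) (hp : p.IsPath) :
    -(inflCorr S).det ≤ pathWeight (inflCorr S) p ∧
    pathWeight (inflCorr S) p ≤ (inflCorr S).det ∧
    pathWeight (inflCorr S) p / (inflCorr S).det = phiWeight S p :=
  inflated_correlation_weight_bounds_general S hS G p hp
end
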